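/- Let n ≥ 1 and let α = (α₁,…,α_n) and β = (β₁,…,β_n) be vectors of natural numbers with Σᵢ αᵢ = Σᵢ βᵢ = d. Then in ℚ[x₁,…,x_n, y₁,…,y_n] the polynomial P_{α,β} = ∏_{i=1}^n x_i^{αᵢ} y_i^{βᵢ} + ∏_{i=1}^n x_i^{βᵢ} y_i^{αᵢ} lies in the subring (with integer coefficients) generated by the elements τ_{i,j} = −(x_i−x_j)(y_i−y_j)/2 for 1 ≤ i < j ≤ n together with the elements τ_{i,n+1} = −x_i y_i/2 for 1 ≤ i ≤ n. -/

import Mathlib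

/-!
Call an element integral if it lies in the subring generated by the `τ`'s, and write
`s_ij = x_i y_j + x_j y_i`, `a_ij = x_i y_j - x_j y_i`. Every `s_ij / 2` is integral, since
`s_ij / 2 = τ_ij - τ_{i,n+1} - τ_{j,n+1}`. List the `x`-indices of `∏ x_i^{α_i} y_i^{β_i}`
(with multiplicity) against its `y`-indices, and build the monomial one pair `x_i y_j` at a time.
With `u, v` the two partial products, a step replaces them by `u' = x_i y_j u`
and `v' = x_j y_i v`, and
`u' + v' = (s_ij / 2) (u + v) + (a_ij / 2) (u - v)`,
`u' - v' = (a_ij / 2) (u + v) + (s_ij / 2) (u - v)`.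
The halves `a_ij / 2` are not integral, but the products `a_kl (u - v) / 2` stay integral along
the induction, thanks to `a_kl a_ij / 4 = (s_kj / 2)(s_li / 2) - (s_ki / 2)(s_lj / 2)`.
-/

open MvPolynomial Finset

/-- The variable `xᵢ` in the polynomial ring `ℚ[x₁,…, y₁,…]`, indexed from `0`. -/
noncomputable def xVar (i : ℕ) : MvPolynomial (ℕ ⊕ ℕ) ℚ := X (Sum.inl i)

/-- The variable `yᵢ` in the polynomial ring `ℚ[x₁,…, y₁,…]`, indexed from `0`. -/
noncomputable def yVar (i : ℕ) : MvPolynomial (ℕ ⊕ ℕ) ℚ := X (Sum.inr i)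

theorem multiset_prod_map_sum_replicate {M : Type*} [CommMonoid M] (n : ℕ) (γ : ℕ → ℕ)
    (z : ℕ → M) :
    ((∑ i : Fin n, Multiset.replicate (γ i) i).map fun i : Fin n => z i).prod =
      ∏ i ∈ range n, z i ^ γ i := by
  rw [← Multiset.coe_mapAddMonoidHom, map_sum, Multiset.prod_sum]
  simp [Fin.prod_univ_eq_prod_range (fun i => z i ^ γ i)]

section BalancedPair

variable {S ι : Type*} [CommRing S]

/-- The invariant of the induction: `u + v ∈ T` and `(x_k y_l - x_l y_k) (u - v) / 2 ∈ T`. -/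
def IsBalancedPair (T : Subring S) (x y : ι → S) (u v : S) : Prop :=
  u + v ∈ T ∧ ∀ k l, ∃ r ∈ T, (x k * y l - x l * y k) * (u - v) = 2 * r

variable {T : Subring S} {x y : ι → S}

theorem isBalancedPair_one : IsBalancedPair T x y 1 1 :=
  ⟨T.add_mem T.one_mem T.one_mem, fun _ _ => ⟨0, T.zero_mem, by ring⟩⟩

theorem IsBalancedPair.mul (h2 : IsLeftRegular (2 : S))
    (hs : ∀ i j, ∃ r ∈ T, x i * y j + x j * y i = 2 * r) {u v : S}
    (h : IsBalancedPair T x y u v) (i j : ι) :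
    IsBalancedPair T x y (x i * y j * u) (x j * y i * v) := by
  obtain ⟨huv, hdiff⟩ := h
  obtain ⟨σ, hσT, hσ⟩ := hs i j
  obtain ⟨t, htT, ht⟩ := hdiff i j
  refine ⟨?_, fun k l => ?_⟩
  · have hsum : x i * y j * u + x j * y i * v = σ * (u + v) + t :=
      h2 (by linear_combination (u + v) * hσ + ht)
    rw [hsum]
    exact T.add_mem (T.mul_mem hσT huv) htT
  · obtain ⟨t', ht'T, ht'⟩ := hdiff k l
    obtain ⟨σkj, hσkjT, hσkj⟩ := hs k j
    obtain ⟨σli, hσliT, hσli⟩ := hs l i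
    obtain ⟨σki, hσkiT, hσki⟩ := hs k i
    obtain ⟨σlj, hσljT, hσlj⟩ := hs l j
    refine ⟨σ * t' + (σkj * σli - σki * σlj) * (u + v),
      T.add_mem (T.mul_mem hσT ht'T)
        (T.mul_mem (T.sub_mem (T.mul_mem hσkjT hσliT) (T.mul_mem hσkiT hσljT)) huv), h2 ?_⟩
    linear_combination (x k * y l - x l * y k) * (u - v) * hσ + 2 * σ * ht' +
      (u + v) * (x l * y i + x i * y l) * hσkj + 2 * σkj * (u + v) * hσli -
      (u + v) * (x l * y j + x j * y l) * hσki - 2 * σki * (u + v) * hσlj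

theorem isBalancedPair_multiset_prod (h2 : IsLeftRegular (2 : S))
    (hs : ∀ i j, ∃ r ∈ T, x i * y j + x j * y i = 2 * r) :
    ∀ A B : Multiset ι, Multiset.card A = Multiset.card B →
      IsBalancedPair T x y ((A.map x).prod * (B.map y).prod)
        ((B.map x).prod * (A.map y).prod) := by
  intro A
  induction A using Multiset.induction_on with
  | empty =>
    intro B hB
    rw [Multiset.card_eq_zero.mp hB.symm]
    simpa using isBalancedPair_one
  | cons i A ih =>
    intro B hB
    obtain ⟨j, hj⟩ := (Multiset.card_pos_iff_exists_mem (s := B)).mp (by simp [← hB])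
    obtain ⟨B, rfl⟩ := Multiset.exists_cons_of_mem hj
    have hstep := (ih B (by simpa using hB)).mul h2 hs i j
    simp only [Multiset.map_cons, Multiset.prod_cons]
    convert hstep using 1 <;> ring

end BalancedPair

noncomputable def tau (i j : ℕ) : MvPolynomial (ℕ ⊕ ℕ) ℚ :=
  C (-(1 / 2) : ℚ) * ((xVar i - xVar j) * (yVar i - yVar j))

/-- `τ_{i,n+1}` of the paper. -/
noncomputable def tauDiag (i : ℕ) : MvPolynomial (ℕ ⊕ ℕ) ℚ :=
  C (-(1 / 2) : ℚ) * (xVar i * yVar i)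

noncomputable def tauSubring (n : ℕ) : Subring (MvPolynomial (ℕ ⊕ ℕ) ℚ) :=
  Subring.closure
    ({p | ∃ i j : ℕ, i < j ∧ j < n ∧ p = tau i j} ∪
      {p | ∃ i : ℕ, i < n ∧ p = tauDiag i})

theorem tauDiag_mem_tauSubring {n i : ℕ} (hi : i < n) : tauDiag i ∈ tauSubring n :=
  Subring.subset_closure (Or.inr ⟨i, hi, rfl⟩)

theorem tau_symm (i j : ℕ) : tau i j = tau j i := by
  unfold tau
  ring

theorem tau_mem_tauSubring {n i j : ℕ} (hi : i < n) (hj : j < n) : tau i j ∈ tauSubring n := by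
  rcases lt_trichotomy i j with h | rfl | h
  · exact Subring.subset_closure (Or.inl ⟨i, j, h, hj, rfl⟩)
  · simp [tau]
  · exact tau_symm i j ▸ Subring.subset_closure (Or.inl ⟨j, i, h, hi, rfl⟩)

theorem xVar_mul_yVar_add_eq (i j : ℕ) :
    xVar i * yVar j + xVar j * yVar i = 2 * (tau i j - tauDiag i - tauDiag j) := by
  have h : (2 : MvPolynomial (ℕ ⊕ ℕ) ℚ) * C (-(1 / 2) : ℚ) = -1 := by
    rw [show (2 : MvPolynomial (ℕ ⊕ ℕ) ℚ) = C 2 from (map_ofNat C 2).symm, ← C_mul]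
    norm_num
  unfold tau tauDiag
  linear_combination
    (xVar i * yVar i + xVar j * yVar j - (xVar i - xVar j) * (yVar i - yVar j)) * h

theorem isLeftRegular_two : IsLeftRegular (2 : MvPolynomial (ℕ ⊕ ℕ) ℚ) :=
  IsLeftCancelMulZero.mul_left_cancel_of_ne_zero two_ne_zero

theorem statement1 (n : ℕ) (d : ℕ) (α β : ℕ → ℕ)
    (hα : ∑ i ∈ Finset.range n, α i = d) (hβ : ∑ i ∈ Finset.range n, β i = d) :
    (∏ i ∈ Finset.range n, xVar i ^ α i * yVar i ^ β i) +
      (∏ i ∈ Finset.range n, xVar i ^ β i * yVar i ^ α i) ∈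
    Subring.closure
      ({p : MvPolynomial (ℕ ⊕ ℕ) ℚ | ∃ i j : ℕ, i < j ∧ j < n ∧
          p = C (-(1 / 2) : ℚ) * ((xVar i - xVar j) * (yVar i - yVar j))} ∪
       {p : MvPolynomial (ℕ ⊕ ℕ) ℚ | ∃ i : ℕ, i < n ∧
          p = C (-(1 / 2) : ℚ) * (xVar i * yVar i)}) := by
  let word (γ : ℕ → ℕ) : Multiset (Fin n) := ∑ i : Fin n, Multiset.replicate (γ i) i
  have hcard : Multiset.card (word α) = Multiset.card (word β) := by
    simp [word, Fin.sum_univ_eq_sum_range, hα, hβ]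
  have hs (i j : Fin n) : ∃ r ∈ tauSubring n, xVar i * yVar j + xVar j * yVar i = 2 * r :=
    ⟨_, sub_mem (sub_mem (tau_mem_tauSubring i.2 j.2) (tauDiag_mem_tauSubring i.2))
      (tauDiag_mem_tauSubring j.2), xVar_mul_yVar_add_eq i j⟩
  have h := (isBalancedPair_multiset_prod isLeftRegular_two hs _ _ hcard).1
  simp only [word, multiset_prod_map_sum_replicate, ← prod_mul_distrib] at h
  exact h
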